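/- Equip ℂ³ with the sup norm. Let p : ℂ³ → ℂ³ be a linear map with operator norm ‖p‖ ≤ 1 such that p(0,1,1) = (0,1,1) and range p ⊆ {(x, y, z) ∈ ℂ³ : z = x + y}. Then p(1,0,0) = 0. -/

import Mathlib

/-!
A contraction of `ℂ³` (sup norm) fixing `v = (0,1,1)` maps `v ± e₁`, which again have norm `1`,
into the unit ball; so the second and third coordinates of `v ± p e₁` have modulus at most `1`,
while those of `v` have modulus exactly `1`. Since `ℂ` is strictly convex (parallelogram law),
this forces `(p e₁) 1 = (p e₁) 2 = 0`, and then `(p e₁) 0 = 0` because `range p` lies in the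
plane `z = x + y`.
-/

theorem eq_zero_of_norm_add_le_of_norm_sub_le {𝕜 E : Type*} [RCLike 𝕜] [NormedAddCommGroup E]
    [InnerProductSpace 𝕜 E] {x y : E} (hadd : ‖x + y‖ ≤ ‖x‖) (hsub : ‖x - y‖ ≤ ‖x‖) : y = 0 := by
  have hpar := parallelogram_law_with_norm 𝕜 x y
  have hy : ‖y‖ ^ 2 ≤ 0 := by
    nlinarith [norm_nonneg (x + y), norm_nonneg (x - y)]
  exact norm_eq_zero.mp (pow_eq_zero_iff two_ne_zero |>.mp (le_antisymm hy (sq_nonneg _)))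

theorem ContinuousLinearMap.apply_apply_eq_zero_of_norm_add_le_of_norm_sub_le
    {𝕜 E ι : Type*} [RCLike 𝕜] [NormedAddCommGroup E] [NormedSpace 𝕜 E] [Fintype ι]
    (p : E →L[𝕜] (ι → 𝕜)) (hp : ‖p‖ ≤ 1) {v x : E} {i : ι}
    (hadd : ‖v + x‖ ≤ ‖p v i‖) (hsub : ‖v - x‖ ≤ ‖p v i‖) : p x i = 0 := by
  have hcontract (w : E) : ‖p w i‖ ≤ ‖w‖ :=
    calc ‖p w i‖ ≤ ‖p w‖ := norm_le_pi_norm _ i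
      _ ≤ 1 * ‖w‖ := p.le_of_opNorm_le hp w
      _ = ‖w‖ := one_mul _
  refine eq_zero_of_norm_add_le_of_norm_sub_le (𝕜 := 𝕜) (x := p v i) ?_ ?_
  · simpa only [map_add, Pi.add_apply] using (hcontract (v + x)).trans hadd
  · simpa only [map_sub, Pi.sub_apply] using (hcontract (v - x)).trans hsub

theorem norm_vecCons_le_one {E : Type*} [SeminormedAddCommGroup E] {a b c : E}
    (ha : ‖a‖ ≤ 1) (hb : ‖b‖ ≤ 1) (hc : ‖c‖ ≤ 1) : ‖(![a, b, c] : Fin 3 → E)‖ ≤ 1 := by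
  refine (pi_norm_le_iff_of_nonneg zero_le_one).mpr fun i => ?_
  fin_cases i <;> assumption

/-- Equip `ℂ³` with the sup norm. If `p : ℂ³ → ℂ³` is linear with
`‖p‖ ≤ 1`, `p (0,1,1) = (0,1,1)` and `range p ⊆ {(x,y,z) : z = x + y}`,
then `p (1,0,0) = 0`. -/
theorem stmt7
    (p : (Fin 3 → ℂ) →L[ℂ] (Fin 3 → ℂ)) (hnorm : ‖p‖ ≤ 1)
    (hfix : p ![0, 1, 1] = ![0, 1, 1])
    (hrange : Set.range p ⊆ {v : Fin 3 → ℂ | v 2 = v 0 + v 1}) :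
    p ![1, 0, 0] = 0 := by
  have hadd : ‖(![0, 1, 1] + ![1, 0, 0] : Fin 3 → ℂ)‖ ≤ 1 := by
    simpa using norm_vecCons_le_one (a := 1) (b := 1) (c := 1) (by simp) (by simp) (by simp)
  have hsub : ‖(![0, 1, 1] - ![1, 0, 0] : Fin 3 → ℂ)‖ ≤ 1 := by
    simpa using norm_vecCons_le_one (a := -1) (b := 1) (c := 1) (by simp) (by simp) (by simp)
  have hcoord (i : Fin 3) (hi : ‖p ![0, 1, 1] i‖ = 1) : p ![1, 0, 0] i = 0 :=
    p.apply_apply_eq_zero_of_norm_add_le_of_norm_sub_le hnorm (hadd.trans hi.ge) (hsub.trans hi.ge)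
  have h1 : p ![1, 0, 0] 1 = 0 := hcoord 1 (by simp [hfix])
  have h2 : p ![1, 0, 0] 2 = 0 := hcoord 2 (by simp [hfix])
  have h0 : p ![1, 0, 0] 0 = 0 := by
    have hplane : p ![1, 0, 0] 2 = p ![1, 0, 0] 0 + p ![1, 0, 0] 1 := hrange ⟨_, rfl⟩
    rw [h1, h2, add_zero] at hplane
    exact hplane.symm
  funext i
  fin_cases i <;> assumption
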